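/- An R-homomorphism f: M → N is a w-isomorphism (i.e., f_m: M_m → N_m is an isomorphism for every maximal w-ideal m of R) if and only if both ker(f) and coker(f) are GV-torsion. -/
import Mathlib


open CategoryTheory

universe u

section Defs
variable (R : Type u) [CommRing R]

/-- `J` is a Glaz–Vasconcelos ideal (GV-ideal): finitely generated and the natural map
`R → Hom_R(J, R)`, `r ↦ (x ↦ r•x)`, is an isomorphism. -/
def IsGVIdeal (J : Ideal R) : Prop :=
  J.FG ∧ Function.Bijective fun r : R =>
    ((LinearMap.lsmul R R r).comp J.subtype : J →ₗ[R] R)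

variable (M : Type u) [AddCommGroup M] [Module R M]

/-- `M` is GV-torsion: every element is killed by some GV-ideal. -/
def IsGVTorsion : Prop :=
  ∀ x : M, ∃ J : Ideal R, IsGVIdeal R J ∧ ∀ a ∈ J, a • x = 0

/-- `M` is GV-torsionfree: no nonzero element is killed by a GV-ideal. -/
def IsGVTorsionFree : Prop :=
  ∀ x : M, (∃ J : Ideal R, IsGVIdeal R J ∧ ∀ a ∈ J, a • x = 0) → x = 0

/-- The w-splitting condition on the epimorphism `g` of a short exact sequence:
there are a GV-ideal `⟨d₁,…,dₙ⟩` and maps `hₖ` with `g ∘ hₖ = (dₖ•·)`. -/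
def IsWSplitSeq {B C : Type u} [AddCommGroup B] [Module R B] [AddCommGroup C] [Module R C]
    (g : B →ₗ[R] C) : Prop :=
  ∃ (n : ℕ) (d : Fin n → R), IsGVIdeal R (Ideal.span (Set.range d)) ∧
    ∃ h : Fin n → (C →ₗ[R] B), ∀ k, ∀ c : C, g (h k c) = d k • c

/-- `M` is a w-split module: some short exact sequence `0 → K → P → M → 0` with
`P` projective is w-split. -/
def IsWSplitModule : Prop :=
  ∃ (P : Type u) (_ : AddCommGroup P) (_ : Module R P), Module.Projective R P ∧
    ∃ g : P →ₗ[R] M, Function.Surjective g ∧ IsWSplitSeq R g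

/-- The Ext group `Ext^n_R(M, N)` as an object of `ModuleCat R`. -/
noncomputable def extMod (n : ℕ) (N : Type u) [AddCommGroup N] [Module R N] : ModuleCat.{u} R :=
  ((Ext R (ModuleCat.{u} R) n).obj (Opposite.op (ModuleCat.of R M))).obj (ModuleCat.of R N)

/-- `M` is a w-module: GV-torsionfree and `Ext¹_R(R/J, M) = 0` for all GV-ideals `J`. -/
def IsWModule : Prop :=
  IsGVTorsionFree R M ∧
    ∀ J : Ideal R, IsGVIdeal R J → Subsingleton (extMod R (R ⧸ J) 1 M)

/-- `ι : M →ₗ E` exhibits `E` as a w-envelope `M_w` of the GV-torsionfree module `M`: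
`E` is a w-module containing `M` with GV-torsion quotient `E/M`. -/
def IsWEnvelope (E : Type u) [AddCommGroup E] [Module R E] (ι : M →ₗ[R] E) : Prop :=
  Function.Injective ι ∧ IsWModule R E ∧ IsGVTorsion R (E ⧸ LinearMap.range ι)

/-- `M` is w-projective: `Ext¹_R(L(M), N)` is GV-torsion for every GV-torsionfree
w-module `N`, where `L(M) = (M/tor_GV(M))_w`. -/
def IsWProjective : Prop :=
  ∀ (T : Submodule R M),
    (∀ x : M, x ∈ T ↔ ∃ J : Ideal R, IsGVIdeal R J ∧ ∀ a ∈ J, a • x = 0) →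
    ∀ (L : Type u) (_ : AddCommGroup L) (_ : Module R L) (ι : (M ⧸ T) →ₗ[R] L),
      IsWEnvelope R (M ⧸ T) L ι →
      ∀ (N : Type u) (_ : AddCommGroup N) (_ : Module R N),
        IsGVTorsionFree R N → IsWModule R N → IsGVTorsion R (extMod R L 1 N)

/-- `I` is a w-ideal: `I_w = I`, i.e. any `x` with `Jx ⊆ I` for some GV-ideal `J`
already lies in `I`. -/
def IsWIdeal (I : Ideal R) : Prop :=
  ∀ x : R, (∃ J : Ideal R, IsGVIdeal R J ∧ ∀ a ∈ J, a * x ∈ I) → x ∈ I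

/-- `I` is a maximal w-ideal: maximal among proper w-ideals of `R`. -/
def IsMaximalWIdeal (I : Ideal R) : Prop :=
  I ≠ ⊤ ∧ IsWIdeal R I ∧ ∀ I' : Ideal R, IsWIdeal R I' → I' ≠ ⊤ → I ≤ I' → I = I'

end Defs


section Aux
variable {R : Type u} [CommRing R]

private lemma gv_uniq {J : Ideal R} (hJ : IsGVIdeal R J) {r r' : R}
    (h : ∀ x ∈ J, r * x = r' * x) : r = r' := by
  refine hJ.2.1 (LinearMap.ext fun x => ?_)
  simpa using h x x.2

private lemma isGVIdeal_top : IsGVIdeal R (⊤ : Ideal R) := by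
  refine ⟨⟨{1}, by simp⟩, ?_, ?_⟩
  · intro r r' h
    have := LinearMap.congr_fun h ⟨1, trivial⟩
    simpa using this
  · intro φ
    refine ⟨φ ⟨1, trivial⟩, LinearMap.ext fun x => ?_⟩
    have hx : (x : R) • (⟨1, trivial⟩ : (⊤ : Ideal R)) = x := by
      ext; simp
    conv_rhs => rw [← hx, map_smul]
    simp [mul_comm]

private def mulRight (J₁ J₂ : Ideal R) (b : J₂) : J₁ →ₗ[R] ↥(J₁ * J₂) where
  toFun a := ⟨a.1 * b.1, Ideal.mul_mem_mul a.2 b.2⟩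
  map_add' a a' := by ext; simp [add_mul]
  map_smul' c a := by ext; simp [mul_assoc]

private lemma IsGVIdeal.mul {J₁ J₂ : Ideal R} (h₁ : IsGVIdeal R J₁) (h₂ : IsGVIdeal R J₂) :
    IsGVIdeal R (J₁ * J₂) := by
  refine ⟨Submodule.FG.mul h₁.1 h₂.1, ?_, ?_⟩
  · intro r r' h
    refine gv_uniq h₂ fun b hb => gv_uniq h₁ fun a ha => ?_
    have := LinearMap.congr_fun h ⟨a * b, Ideal.mul_mem_mul ha hb⟩
    simp only [LinearMap.coe_comp, Function.comp_apply, Submodule.coe_subtype,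
      LinearMap.lsmul_apply, smul_eq_mul] at this
    linear_combination this
  · intro φ
    choose g hg using fun b : J₂ => h₁.2.2 (φ.comp (mulRight J₁ J₂ b))
    have hg' : ∀ (b : J₂) (a : J₁), g b * a = φ ⟨a.1 * b.1, Ideal.mul_mem_mul a.2 b.2⟩ := by
      intro b a
      have := LinearMap.congr_fun (hg b) a
      simpa [mulRight] using this
    have gadd : ∀ b b' : J₂, g (b + b') = g b + g b' := by
      intro b b'
      refine gv_uniq h₁ fun a ha => ?_
      have e1 := hg' (b + b') ⟨a, ha⟩
      have e2 := hg' b ⟨a, ha⟩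
      have e3 := hg' b' ⟨a, ha⟩
      have esplit : (⟨a * (b + b').1, Ideal.mul_mem_mul ha (b + b').2⟩ : ↥(J₁ * J₂))
          = ⟨a * b.1, Ideal.mul_mem_mul ha b.2⟩ + ⟨a * b'.1, Ideal.mul_mem_mul ha b'.2⟩ := by
        ext; simp [mul_add]
      rw [esplit, map_add] at e1
      rw [← e2, ← e3] at e1
      linear_combination e1
    have gsmul : ∀ (c : R) (b : J₂), g (c • b) = c * g b := by
      intro c b
      refine gv_uniq h₁ fun a ha => ?_
      have e1 := hg' (c • b) ⟨a, ha⟩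
      have e2 := hg' b ⟨a, ha⟩
      have esplit : (⟨a * (c • b).1, Ideal.mul_mem_mul ha (c • b).2⟩ : ↥(J₁ * J₂))
          = c • ⟨a * b.1, Ideal.mul_mem_mul ha b.2⟩ := by
        ext; simp [mul_left_comm, mul_comm]
      rw [esplit, map_smul, smul_eq_mul, ← e2] at e1
      linear_combination e1
    obtain ⟨r, hr⟩ := h₂.2.2
      { toFun := g
        map_add' := gadd
        map_smul' := gsmul }
    have hr' : ∀ b : J₂, r * b = g b := by
      intro b
      have := LinearMap.congr_fun hr b
      simpa using this
    refine ⟨r, LinearMap.ext fun z => ?_⟩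
    simp only [LinearMap.coe_comp, Function.comp_apply, Submodule.coe_subtype,
      LinearMap.lsmul_apply, smul_eq_mul]
    have key : ∀ (z : R) (hz : z ∈ J₁ * J₂), r * z = φ ⟨z, hz⟩ := by
      intro z hz
      induction hz using Submodule.mul_induction_on' with
      | mem_mul_mem a ha b hb =>
        have := hg' ⟨b, hb⟩ ⟨a, ha⟩
        rw [← this, ← hr' ⟨b, hb⟩]
        ring
      | add x hx y hy ihx ihy =>
        have esplit : (⟨x + y, add_mem hx hy⟩ : ↥(J₁ * J₂)) = ⟨x, hx⟩ + ⟨y, hy⟩ := rfl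
        rw [esplit, map_add, ← ihx, ← ihy, mul_add]
    exact key z.1 z.2

private lemma exists_maximalWIdeal (I : Ideal R)
    (hI : ¬ ∃ J : Ideal R, IsGVIdeal R J ∧ J ≤ I) :
    ∃ m : Ideal R, I ≤ m ∧ IsMaximalWIdeal R m ∧ m.IsPrime := by
  set s : Set (Ideal R) := {K | ¬ ∃ J : Ideal R, IsGVIdeal R J ∧ J ≤ K} with hs
  have hchain : ∀ c ⊆ s, IsChain (· ≤ ·) c → ∀ y ∈ c, ∃ ub ∈ s, ∀ z ∈ c, z ≤ ub := by
    intro c hcs hc y hy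
    refine ⟨sSup c, ?_, fun z hz => le_sSup hz⟩
    rintro ⟨J, hJ, hJle⟩
    have hcompact := (Submodule.fg_iff_compact J).mp hJ.1
    obtain ⟨K, hKc, hJK⟩ :=
      (CompleteLattice.isCompactElement_iff_le_of_directed_sSup_le _ J).mp hcompact
        c ⟨y, hy⟩ hc.directedOn hJle
    exact hcs hKc ⟨J, hJ, hJK⟩
  obtain ⟨m, hIm, hm⟩ := zorn_le_nonempty₀ s hchain I hI
  have key : ∀ x : R, x ∉ m → ∃ J : Ideal R, IsGVIdeal R J ∧ J ≤ m ⊔ Ideal.span {x} := by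
    intro x hx
    by_contra hcon
    have hle : m ⊔ Ideal.span {x} ≤ m := hm.2 hcon le_sup_left
    exact hx (hle (Ideal.mem_sup_right (Ideal.subset_span rfl)))
  have hne : m ≠ ⊤ := by
    intro h
    exact hm.1 ⟨⊤, isGVIdeal_top, by simp [h]⟩
  have hw : IsWIdeal R m := by
    rintro x ⟨J, hJ, hJx⟩
    by_contra hx
    obtain ⟨J', hJ', hJ'le⟩ := key x hx
    refine hm.1 ⟨J * J', hJ.mul hJ', ?_⟩
    rw [Ideal.mul_le]
    intro a ha b hb
    obtain ⟨y, hy, z, hz, rfl⟩ := Submodule.mem_sup.mp (hJ'le hb)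
    obtain ⟨c, rfl⟩ := Ideal.mem_span_singleton'.mp hz
    have e : a * (y + c * x) = a * y + c * (a * x) := by ring
    rw [e]
    exact add_mem (m.mul_mem_left a hy) (m.mul_mem_left c (hJx a ha))
  have hp : m.IsPrime := by
    refine ⟨hne, fun {a b} hab => ?_⟩
    by_contra hcon
    push_neg at hcon
    obtain ⟨ha, hb⟩ := hcon
    obtain ⟨J₁, hJ₁, hle₁⟩ := key a ha
    obtain ⟨J₂, hJ₂, hle₂⟩ := key b hb
    refine hm.1 ⟨J₁ * J₂, hJ₁.mul hJ₂, ?_⟩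
    rw [Ideal.mul_le]
    intro u hu v hv
    obtain ⟨y₁, hy₁, z₁, hz₁, rfl⟩ := Submodule.mem_sup.mp (hle₁ hu)
    obtain ⟨c₁, rfl⟩ := Ideal.mem_span_singleton'.mp hz₁
    obtain ⟨y₂, hy₂, z₂, hz₂, rfl⟩ := Submodule.mem_sup.mp (hle₂ hv)
    obtain ⟨c₂, rfl⟩ := Ideal.mem_span_singleton'.mp hz₂
    have e : (y₁ + c₁ * a) * (y₂ + c₂ * b)
        = (y₂ + c₂ * b) * y₁ + (c₁ * a) * y₂ + (c₁ * c₂) * (a * b) := by ring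
    rw [e]
    exact add_mem (add_mem (m.mul_mem_left _ hy₁) (m.mul_mem_left _ hy₂))
      (m.mul_mem_left _ hab)
  refine ⟨m, hIm, ⟨hne, hw, ?_⟩, hp⟩
  intro I' hw' hne' hle
  by_cases hI's : I' ∈ s
  · exact le_antisymm hle (hm.2 hI's hle)
  · exfalso
    simp only [hs, Set.mem_setOf_eq, not_not] at hI's
    obtain ⟨J, hJ, hJle⟩ := hI's
    exact hne' ((Ideal.eq_top_iff_one _).mpr
      (hw' 1 ⟨J, hJ, fun a ha => by rw [mul_one]; exact hJle ha⟩))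

private lemma gv_not_le {J m : Ideal R} (hJ : IsGVIdeal R J) (hm : IsMaximalWIdeal R m) :
    ∃ a ∈ J, a ∉ m := by
  by_contra h
  push_neg at h
  exact hm.1 ((Ideal.eq_top_iff_one _).mpr
    (hm.2.1 1 ⟨J, hJ, fun a ha => by rw [mul_one]; exact h a ha⟩))

end Aux

/-- `f : M → N` is a w-isomorphism (localization at every maximal w-ideal is bijective)
iff `ker f` and `coker f` are GV-torsion. -/
theorem stmt16 {R : Type u} [CommRing R] {M N : Type u}
    [AddCommGroup M] [Module R M] [AddCommGroup N] [Module R N] (f : M →ₗ[R] N) :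
    (∀ (m : Ideal R), IsMaximalWIdeal R m → ∀ (_ : m.IsPrime),
      Function.Bijective
        (IsLocalizedModule.map m.primeCompl
          (LocalizedModule.mkLinearMap m.primeCompl M)
          (LocalizedModule.mkLinearMap m.primeCompl N) f)) ↔

    IsGVTorsion R (LinearMap.ker f) ∧ IsGVTorsion R (N ⧸ LinearMap.range f) := by
  constructor
  · -- forward: localizations bijective → ker and coker GV-torsion
    intro h
    constructor
    · rintro ⟨x, hx⟩
      by_contra hcon
      have hno : ¬ ∃ J : Ideal R, IsGVIdeal R J ∧
          J ≤ LinearMap.ker (LinearMap.toSpanSingleton R M x) := by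
        rintro ⟨J, hJ, hle⟩
        refine hcon ⟨J, hJ, fun a ha => ?_⟩
        refine Subtype.ext ?_
        simpa using hle ha
      obtain ⟨m, hIm, hmw, hmp⟩ := exists_maximalWIdeal _ hno
      haveI := hmp
      have hbij := h m hmw hmp
      have h0 : (IsLocalizedModule.map m.primeCompl
          (LocalizedModule.mkLinearMap m.primeCompl M)
          (LocalizedModule.mkLinearMap m.primeCompl N) f)
          (IsLocalizedModule.mk' (LocalizedModule.mkLinearMap m.primeCompl M) x (1 : m.primeCompl)) = 0 := by
        rw [IsLocalizedModule.map_mk']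
        rw [IsLocalizedModule.mk'_eq_zero]
        rw [LinearMap.mem_ker.mp hx, map_zero]
      have hz : IsLocalizedModule.mk' (LocalizedModule.mkLinearMap m.primeCompl M) x (1 : m.primeCompl) = 0 :=
        hbij.1 (by rw [h0, map_zero])
      obtain ⟨t, ht⟩ := (IsLocalizedModule.mk'_eq_zero' _ _).mp hz
      have htm : (t : R) ∈ LinearMap.ker (LinearMap.toSpanSingleton R M x) := by
        simpa [Submonoid.smul_def] using ht
      exact t.2 (hIm htm)
    · intro q
      obtain ⟨y, rfl⟩ := Submodule.Quotient.mk_surjective _ q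
      by_contra hcon
      have hno : ¬ ∃ J : Ideal R, IsGVIdeal R J ∧
          J ≤ Submodule.comap (LinearMap.toSpanSingleton R N y) (LinearMap.range f) := by
        rintro ⟨J, hJ, hle⟩
        refine hcon ⟨J, hJ, fun a ha => ?_⟩
        rw [← Submodule.Quotient.mk_smul, Submodule.Quotient.mk_eq_zero]
        simpa using hle ha
      obtain ⟨m, hIm, hmw, hmp⟩ := exists_maximalWIdeal _ hno
      haveI := hmp
      obtain ⟨z, hz⟩ := (h m hmw hmp).2
        (IsLocalizedModule.mk' (LocalizedModule.mkLinearMap m.primeCompl N) y (1 : m.primeCompl))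
      obtain ⟨⟨x, s⟩, rfl⟩ := IsLocalizedModule.mk'_surjective m.primeCompl
        (LocalizedModule.mkLinearMap m.primeCompl M) z
      simp only [Function.uncurry_apply_pair, IsLocalizedModule.map_mk',
        IsLocalizedModule.mk'_eq_mk'_iff] at hz
      obtain ⟨t, ht⟩ := hz
      -- ht : t • s • y = t • 1 • f x
      have hmem : ((t * s : m.primeCompl) : R) ∈
          Submodule.comap (LinearMap.toSpanSingleton R N y) (LinearMap.range f) := by
        simp only [Submodule.mem_comap, LinearMap.toSpanSingleton_apply, Submonoid.coe_mul]
        refine ⟨(t : R) • x, ?_⟩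
        rw [map_smul]
        simp only [Submonoid.smul_def, one_smul] at ht
        rw [← ht, ← mul_smul]
      exact (t * s).2 (hIm hmem)
  · -- backward: ker and coker GV-torsion → localizations bijective
    rintro ⟨hker, hcok⟩ m hm hp
    haveI := hp
    constructor
    · rw [← LinearMap.ker_eq_bot, Submodule.eq_bot_iff]
      intro z hz
      obtain ⟨⟨x, s⟩, rfl⟩ := IsLocalizedModule.mk'_surjective m.primeCompl
        (LocalizedModule.mkLinearMap m.primeCompl M) z
      simp only [Function.uncurry_apply_pair, LinearMap.mem_ker,
        IsLocalizedModule.map_mk'] at hz ⊢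
      obtain ⟨t, ht⟩ := (IsLocalizedModule.mk'_eq_zero' _ _).mp hz
      rw [Submonoid.smul_def] at ht
      have hxk : (t : R) • x ∈ LinearMap.ker f := by
        rw [LinearMap.mem_ker, map_smul, ht]
      obtain ⟨J, hJ, hJkill⟩ := hker ⟨(t : R) • x, hxk⟩
      obtain ⟨a, haJ, ham⟩ := gv_not_le hJ hm
      have hax : a • ((t : R) • x) = 0 := by
        have := congrArg Subtype.val (hJkill a haJ)
        simpa using this
      refine (IsLocalizedModule.mk'_eq_zero' _ _).mpr
        ⟨⟨a * t, m.primeCompl.mul_mem ham t.2⟩, ?_⟩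
      rw [Submonoid.smul_def]
      show (a * (t : R)) • x = 0
      rw [mul_smul]
      exact hax
    · intro z
      obtain ⟨⟨y, s⟩, rfl⟩ := IsLocalizedModule.mk'_surjective m.primeCompl
        (LocalizedModule.mkLinearMap m.primeCompl N) z
      simp only [Function.uncurry_apply_pair]
      obtain ⟨J, hJ, hJkill⟩ := hcok (Submodule.Quotient.mk y)
      obtain ⟨a, haJ, ham⟩ := gv_not_le hJ hm
      have hay : a • y ∈ LinearMap.range f := by
        have := hJkill a haJ
        rwa [← Submodule.Quotient.mk_smul, Submodule.Quotient.mk_eq_zero] at this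
      obtain ⟨x, hx⟩ := hay
      refine ⟨IsLocalizedModule.mk' (LocalizedModule.mkLinearMap m.primeCompl M) x
        (⟨a, ham⟩ * s), ?_⟩
      rw [IsLocalizedModule.map_mk', IsLocalizedModule.mk'_eq_mk'_iff]
      refine ⟨1, ?_⟩
      simp only [one_smul, Submonoid.smul_def, Submonoid.coe_mul]
      rw [hx, ← mul_smul, mul_comm]
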